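/- Let (M, ⁰T'', ζ) be a normal strongly pseudoconvex manifold, θ the 1-form with θ|_{⁰T''+⁰T̄''} = 0 and θ(ζ) = 1, and set F^{p,q} = { u ∈ A^{p,q}(M) : dθ∧(ζ⌟u) = 0 }. Then: (1) if u ∈ F^{p,q} then d''u ∈ F^{p,q+1} and d'u ∈ F^{p+1,q}; (2) d'd'' + d''d' = 0 on F^{p,q}; so (F^{p,q}, d', d'') is a double complex. -/

import Mathlib

/-! Since `dθ ∧ (ζ ⌟ u) = 0`, the decomposition of `du` reduces to `du = d'u + d''u`, and expanding
`0 = d(du) = d(d'u) + d(d''u)` gives six homogeneous terms of bidegrees `(p+2,q)`, `(p+1,q+1)` twice,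
`(p,q+2)` with a `(ℂζ)*`-factor and `(p+2,q+1)`, `(p+1,q+2)` without one. These types are pairwise
distinct except for the two `(p+1,q+1)` terms `d''d'u` and `d'd''u`, so projecting onto a type shows
that `dθ ∧ (ζ ⌟ d'u)`, `dθ ∧ (ζ ⌟ d''u)` and `d'd''u + d''d'u` vanish. -/

theorem apply_eq_ite_of_orthogonal {R M ι : Type*} [Semiring R] [AddCommMonoid M] [Module R M]
    [DecidableEq ι] {P : ι → M →ₗ[R] M} (hP : ∀ i j, i ≠ j → ∀ v, P i (P j v) = 0)
    {j : ι} {v : M} (hv : P j v = v) (i : ι) :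
    P i v = if i = j then v else 0 := by
  split_ifs with hij
  · rw [hij, hv]
  · rw [← hv, hP i j hij]

theorem stmt_8_general
    -- the complex-valued smooth differential forms on M (all degrees together)
    (Ω : Type*) [AddCommGroup Ω] [Module ℂ Ω]
    -- the exterior derivative
    (d : Ω →ₗ[ℂ] Ω)
    (hd : ∀ u : Ω, d (d u) = 0)
    -- `P b p q` is the projection onto the component of type
    -- (ℂζ)*^ε ∧ ∧^p(⁰T̄'')* ∧ ∧^q(⁰T'')*, where ε = 1 if b = true and ε = 0 otherwise,
    -- for the decomposition induced by ℂ⊗TM = ⁰T'' ⊕ ⁰T̄'' ⊕ ℂζ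
    (P : Bool → ℕ → ℕ → Ω →ₗ[ℂ] Ω)
    (hPidem : ∀ b p q (u : Ω), P b p q (P b p q u) = P b p q u)
    (hPorth : ∀ b p q b' p' q', (b ≠ b' ∨ p ≠ p' ∨ q ≠ q') →
      ∀ u : Ω, P b p q (P b' p' q' u) = 0)
    -- the wedge product
    (wedge : Ω →ₗ[ℂ] Ω →ₗ[ℂ] Ω)
    -- the 1-form θ with θ|_{⁰T''+⁰T̄''} = 0 and θ(ζ) = 1
    (θ : Ω)
    -- contraction ζ ⌟ · with the normal vector field ζ
    (iζ : Ω →ₗ[ℂ] Ω)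
    -- the operators d' and d'': components of the exterior derivative
    (d1 d2 : Ω →ₗ[ℂ] Ω)
    (hd1 : ∀ b p q (u : Ω), P b p q u = u → d1 u = P b (p + 1) q (d u))
    (hd2 : ∀ b p q (u : Ω), P b p q u = u → d2 u = P b p (q + 1) (d u))
    -- du = d'u + d''u − dθ∧(ζ⌟u) on A^{p,q}(M)
    (hdecomp : ∀ p q (u : Ω), P true p q u = u →
      d u = d1 u + d2 u - wedge (d θ) (iζ u))
    -- ζ ⌟ · maps A^{p,q} into the type ∧^p(⁰T̄'')* ∧ ∧^q(⁰T'')*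
    (hiζ : ∀ p q (u : Ω), P true p q u = u → P false p q (iζ u) = iζ u)
    -- dθ ∧ · raises (p,q) to (p+1,q+1) and kills the (ℂζ)*-factor
    (hdθ : ∀ b p q (u : Ω), P b p q u = u →
      P false (p + 1) (q + 1) (wedge (d θ) u) = wedge (d θ) u)
    :
    ∀ p q (u : Ω), (P true p q u = u ∧ wedge (d θ) (iζ u) = 0) →
      (P true p (q + 1) (d2 u) = d2 u ∧ wedge (d θ) (iζ (d2 u)) = 0) ∧
      (P true (p + 1) q (d1 u) = d1 u ∧ wedge (d θ) (iζ (d1 u)) = 0) ∧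
      d1 (d2 u) + d2 (d1 u) = 0 := by
  intro p q u ⟨hu, hw⟩
  let Q : Bool × ℕ × ℕ → Ω →ₗ[ℂ] Ω := fun t => P t.1 t.2.1 t.2.2
  have hQ : ∀ s t, s ≠ t → ∀ v, Q s (Q t v) = 0 := fun s t hst =>
    hPorth _ _ _ _ _ _ (by simpa only [Ne, Prod.ext_iff, not_and_or] using hst)
  have hd1_type : ∀ b p q v, P b p q v = v → P b (p + 1) q (d1 v) = d1 v := fun b p q v hv => by
    rw [hd1 b p q v hv, hPidem]
  have hd2_type : ∀ b p q v, P b p q v = v → P b p (q + 1) (d2 v) = d2 v := fun b p q v hv => by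
    rw [hd2 b p q v hv, hPidem]
  have hd1u := hd1_type _ _ _ _ hu
  have hd2u := hd2_type _ _ _ _ hu
  have hdu : d u = d1 u + d2 u := by rw [hdecomp p q u hu, hw, sub_zero]
  have hcomp (t) : Q t (d1 (d1 u) + d2 (d1 u) - wedge (d θ) (iζ (d1 u)) +
      (d1 (d2 u) + d2 (d2 u) - wedge (d θ) (iζ (d2 u)))) = 0 := by
    rw [← hdecomp _ _ _ hd1u, ← hdecomp _ _ _ hd2u, ← map_add, ← hdu, hd, map_zero]
  simp only [map_add, map_sub,
    apply_eq_ite_of_orthogonal hQ (j := (true, p + 1 + 1, q)) (hd1_type _ _ _ _ hd1u),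
    apply_eq_ite_of_orthogonal hQ (j := (true, p + 1, q + 1)) (hd2_type _ _ _ _ hd1u),
    apply_eq_ite_of_orthogonal hQ (j := (true, p + 1, q + 1)) (hd1_type _ _ _ _ hd2u),
    apply_eq_ite_of_orthogonal hQ (j := (true, p, q + 1 + 1)) (hd2_type _ _ _ _ hd2u),
    apply_eq_ite_of_orthogonal hQ (j := (false, p + 1 + 1, q + 1)) (hdθ _ _ _ _ (hiζ _ _ _ hd1u)),
    apply_eq_ite_of_orthogonal hQ (j := (false, p + 1, q + 1 + 1)) (hdθ _ _ _ _ (hiζ _ _ _ hd2u))]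
    at hcomp
  exact ⟨⟨hd2u, by simpa using hcomp (false, p + 1, q + 1 + 1)⟩,
    ⟨hd1u, by simpa using hcomp (false, p + 1 + 1, q + 1)⟩,
    by simpa [add_comm] using hcomp (true, p + 1, q + 1)⟩

/-- Let `(M, ⁰T'', ζ)` be a normal strongly pseudoconvex manifold, `θ`
the 1-form with `θ|_{⁰T''+⁰T̄''} = 0` and `θ(ζ) = 1`, and set
`F^{p,q} = { u ∈ A^{p,q}(M) : dθ∧(ζ⌟u) = 0 }`.  Then:
(1) if `u ∈ F^{p,q}` then `d''u ∈ F^{p,q+1}` and `d'u ∈ F^{p+1,q}`;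
(2) `d'd'' + d''d' = 0` on `F^{p,q}`; so `(F^{p,q}, d', d'')` is a double complex.

See `stmt_7` for the abstract model of the forms of `M`: `A^{p,q}(M)` is
`{u | P true p q u = u}` and `d1`, `d2` are `d'`, `d''`. -/
theorem stmt_8
    -- the complex-valued smooth differential forms on M (all degrees together)
    (Ω : Type*) [AddCommGroup Ω] [Module ℂ Ω]
    -- the exterior derivative
    (d : Ω →ₗ[ℂ] Ω)
    (hd : ∀ u : Ω, d (d u) = 0)
    -- `P b p q` is the projection onto the component of type
    -- (ℂζ)*^ε ∧ ∧^p(⁰T̄'')* ∧ ∧^q(⁰T'')*, where ε = 1 if b = true and ε = 0 otherwise,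
    -- for the decomposition induced by ℂ⊗TM = ⁰T'' ⊕ ⁰T̄'' ⊕ ℂζ
    (P : Bool → ℕ → ℕ → Ω →ₗ[ℂ] Ω)
    (hPidem : ∀ b p q (u : Ω), P b p q (P b p q u) = P b p q u)
    (hPorth : ∀ b p q b' p' q', (b ≠ b' ∨ p ≠ p' ∨ q ≠ q') →
      ∀ u : Ω, P b p q (P b' p' q' u) = 0)
    -- the wedge product
    (wedge : Ω →ₗ[ℂ] Ω →ₗ[ℂ] Ω)
    -- the 1-form θ with θ|_{⁰T''+⁰T̄''} = 0 and θ(ζ) = 1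
    (θ : Ω) (hθ : P true 0 0 θ = θ)
    -- contraction ζ ⌟ · with the normal vector field ζ
    (iζ : Ω →ₗ[ℂ] Ω)
    -- the operators d' and d'': components of the exterior derivative
    (d1 d2 : Ω →ₗ[ℂ] Ω)
    (hd1 : ∀ b p q (u : Ω), P b p q u = u → d1 u = P b (p + 1) q (d u))
    (hd2 : ∀ b p q (u : Ω), P b p q u = u → d2 u = P b p (q + 1) (d u))
    -- du = d'u + d''u − dθ∧(ζ⌟u) on A^{p,q}(M)
    (hdecomp : ∀ p q (u : Ω), P true p q u = u →
      d u = d1 u + d2 u - wedge (d θ) (iζ u))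
    -- ζ ⌟ · maps A^{p,q} into the type ∧^p(⁰T̄'')* ∧ ∧^q(⁰T'')*
    (hiζ : ∀ p q (u : Ω), P true p q u = u → P false p q (iζ u) = iζ u)
    -- dθ ∧ · raises (p,q) to (p+1,q+1) and kills the (ℂζ)*-factor
    (hdθ : ∀ b p q (u : Ω), P b p q u = u →
      P false (p + 1) (q + 1) (wedge (d θ) u) = wedge (d θ) u)
    :
    ∀ p q (u : Ω), (P true p q u = u ∧ wedge (d θ) (iζ u) = 0) →
      (P true p (q + 1) (d2 u) = d2 u ∧ wedge (d θ) (iζ (d2 u)) = 0) ∧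
      (P true (p + 1) q (d1 u) = d1 u ∧ wedge (d θ) (iζ (d1 u)) = 0) ∧
      d1 (d2 u) + d2 (d1 u) = 0 :=
  stmt_8_general Ω d hd P hPidem hPorth wedge θ iζ d1 d2 hd1 hd2 hdecomp hiζ hdθ
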